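/- Let d ≥ 1, let Λ : M_d(ℂ) → M_d(ℂ) be a bijective CPTP linear map, and let V : M_d(ℂ) → M_d(ℂ) be a trace-preserving, Hermiticity-preserving linear map that is NOT completely positive. Then there exist two states ρ', ρ'' on ℂ^{d+1} ⊗ ℂ^d, both lying in the image of the set of states under I_{d+1} ⊗ Λ, such that ‖(I_{d+1} ⊗ V)(ρ' − ρ'')‖₁ > ‖ρ' − ρ''‖₁. -/

import Mathlib

open Matrix Kronecker
open scoped ComplexOrder

/-- The trace norm of a complex matrix: the trace of the positive semidefinite
square root of `Aᴴ * A`. -/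
noncomputable def traceNorm {n : Type*} [Fintype n] [DecidableEq n]
    (A : Matrix n n ℂ) : ℝ :=
  (((Matrix.posSemidef_conjTranspose_mul_self A).1.eigenvectorUnitary.1 *
      diagonal (((↑) : ℝ → ℂ) ∘ (√·) ∘ (Matrix.posSemidef_conjTranspose_mul_self A).1.eigenvalues) *
      (star (Matrix.posSemidef_conjTranspose_mul_self A).1.eigenvectorUnitary :
        Matrix n n ℂ)).trace).re

/-- A state: a positive semidefinite matrix of trace one. -/
def IsState {n : Type*} [Fintype n] [DecidableEq n] (ρ : Matrix n n ℂ) : Prop :=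
  ρ.PosSemidef ∧ ρ.trace = 1

/-- A trace-preserving linear map on matrices. -/
def TracePreserving {d : ℕ} (Φ : Matrix (Fin d) (Fin d) ℂ →ₗ[ℂ] Matrix (Fin d) (Fin d) ℂ) : Prop :=
  ∀ A, (Φ A).trace = A.trace

/-- A Hermiticity-preserving linear map on matrices. -/
def HermPreserving {d : ℕ} (Φ : Matrix (Fin d) (Fin d) ℂ →ₗ[ℂ] Matrix (Fin d) (Fin d) ℂ) : Prop :=
  ∀ A, Φ Aᴴ = (Φ A)ᴴ

/-- The ampliation `I_n ⊗ Φ` of a linear map `Φ` on `d × d` matrices, acting blockwise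
on `n × n` block matrices with `d × d` blocks. -/
def ampliation {n d : ℕ} (Φ : Matrix (Fin d) (Fin d) ℂ →ₗ[ℂ] Matrix (Fin d) (Fin d) ℂ)
    (A : Matrix (Fin n × Fin d) (Fin n × Fin d) ℂ) :
    Matrix (Fin n × Fin d) (Fin n × Fin d) ℂ :=
  Matrix.of fun p q => Φ (Matrix.of fun i j => A (p.1, i) (q.1, j)) p.2 q.2

/-- A positive map: maps positive semidefinite matrices to positive semidefinite matrices. -/
def PositiveMap {d : ℕ} (Φ : Matrix (Fin d) (Fin d) ℂ →ₗ[ℂ] Matrix (Fin d) (Fin d) ℂ) : Prop :=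
  ∀ A, A.PosSemidef → (Φ A).PosSemidef

/-- A completely positive map: every ampliation `I_n ⊗ Φ` is a positive map. -/
def CompletelyPositive {d : ℕ}
    (Φ : Matrix (Fin d) (Fin d) ℂ →ₗ[ℂ] Matrix (Fin d) (Fin d) ℂ) : Prop :=
  ∀ n : ℕ, 1 ≤ n → ∀ A : Matrix (Fin n × Fin d) (Fin n × Fin d) ℂ,
    A.PosSemidef → (ampliation Φ A).PosSemidef

/-- A separable state on `ℂ^m ⊗ ℂ^d`: a finite convex combination of product states. -/
def SeparableState {m d : ℕ} (ρ : Matrix (Fin m × Fin d) (Fin m × Fin d) ℂ) : Prop :=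
  ∃ (k : ℕ) (w : Fin k → ℝ) (σ : Fin k → Matrix (Fin m) (Fin m) ℂ)
    (τ : Fin k → Matrix (Fin d) (Fin d) ℂ),
    (∀ i, 0 ≤ w i) ∧ (∑ i, w i) = 1 ∧ (∀ i, IsState (σ i)) ∧ (∀ i, IsState (τ i)) ∧
    ρ = ∑ i, (w i : ℂ) • (σ i ⊗ₖ τ i)

/-!
If `I_n ⊗ V` is not positive, a witness vector `x ∈ ℂⁿ ⊗ ℂᵈ` can be written as `(M ⊗ 1) Ω`, where
`Ω = ∑ⱼ eⱼ ⊗ eⱼ` and `M : ℂ^{d+1} → ℂⁿ` kills the last basis vector. Compressing by `M ⊗ 1` gives a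
state `σ` on `ℂ^{d+1} ⊗ ℂᵈ`, supported away from the last block, with `(I ⊗ V) σ` not positive.
Put `σ' = |d⟩⟨d| ⊗ τ` in the last block. Matrices with orthogonal supports have additive trace
norms, so `‖σ - σ'‖₁ = 2`, while `‖(I ⊗ V)(σ - σ')‖₁ = ‖(I ⊗ V) σ‖₁ + ‖V τ‖₁ > 1 + 1`, because a
Hermitian matrix of trace one has trace norm at least one, with equality only when it is positive.

Since `I ⊗ Λ` is a positive, trace-preserving bijection, `(I ⊗ Λ)⁻¹ (σ - σ')` is Hermitian and
traceless, hence `c (ρ₁ - ρ₂)` for states `ρ₁, ρ₂` and some `c > 0`. The states `(I ⊗ Λ) ρ₁` and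
`(I ⊗ Λ) ρ₂` then differ by `c⁻¹ (σ - σ')`, and both trace norms scale by `c⁻¹`.
-/

open scoped MatrixOrder

namespace Matrix

variable {n : Type*} [Fintype n] [DecidableEq n]

omit [DecidableEq n] in
theorem PosSemidef.re_trace_pos {A : Matrix n n ℂ} (hA : A.PosSemidef) (h : A ≠ 0) :
    0 < A.trace.re := by
  have hne : A.trace ≠ 0 := fun h0 => h (hA.trace_eq_zero_iff.mp h0)
  exact (Complex.pos_iff.mp (lt_of_le_of_ne hA.trace_nonneg hne.symm)).1

theorem IsHermitian.mul_eq_zero_of_sq_mul_sq_eq_zero {a b : Matrix n n ℂ} (ha : a.IsHermitian)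
    (hb : b.IsHermitian) (h : a ^ 2 * b ^ 2 = 0) : a * b = 0 := by
  have hsq : (b * a ^ 2 * b)ᴴ * (b * a ^ 2 * b) = 0 := by
    rw [conjTranspose_mul, conjTranspose_mul, hb.eq, (ha.pow 2).eq]
    calc b * (a ^ 2 * b) * (b * a ^ 2 * b) = b * (a ^ 2 * b ^ 2) * a ^ 2 * b := by
          simp only [sq, Matrix.mul_assoc]
      _ = 0 := by simp [h]
  have hab : (a * b)ᴴ * (a * b) = 0 := by
    rw [conjTranspose_mul, ha.eq, hb.eq]
    simpa [sq, Matrix.mul_assoc] using conjTranspose_mul_self_eq_zero.mp hsq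
  exact conjTranspose_mul_self_eq_zero.mp hab

theorem IsHermitian.cfcAbs_add_of_mul_eq_zero {X Y : Matrix n n ℂ} (hX : X.IsHermitian)
    (hY : Y.IsHermitian) (h : X * Y = 0) : CFC.abs (X + Y) = CFC.abs X + CFC.abs Y := by
  have habs {Z : Matrix n n ℂ} (hZ : Z.IsHermitian) : CFC.abs Z * CFC.abs Z = Z * Z := by
    rw [CFC.abs_mul_abs, star_eq_conjTranspose, hZ.eq]
  have hYX : Y * X = 0 := by
    simpa [hX.eq, hY.eq] using congrArg (·ᴴ) h
  have hXY' : CFC.abs X * CFC.abs Y = 0 :=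
    mul_eq_zero_of_sq_mul_sq_eq_zero (CFC.abs_nonneg X).isSelfAdjoint
      (CFC.abs_nonneg Y).isSelfAdjoint
      (by rw [sq, sq, habs hX, habs hY, Matrix.mul_assoc, ← Matrix.mul_assoc X Y Y, h]; simp)
  have hYX' : CFC.abs Y * CFC.abs X = 0 :=
    mul_eq_zero_of_sq_mul_sq_eq_zero (CFC.abs_nonneg Y).isSelfAdjoint
      (CFC.abs_nonneg X).isSelfAdjoint
      (by rw [sq, sq, habs hX, habs hY, Matrix.mul_assoc, ← Matrix.mul_assoc Y X X, hYX]; simp)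
  refine CFC.sqrt_unique ?_ (add_nonneg (CFC.abs_nonneg X) (CFC.abs_nonneg Y))
  rw [star_eq_conjTranspose, (hX.add hY).eq]
  simp only [Matrix.add_mul, Matrix.mul_add, habs hX, habs hY, hXY', hYX', h, hYX]

theorem map_conjTranspose_of_posSemidef {m : Type*} [Fintype m] [DecidableEq m]
    (f : Matrix n n ℂ →ₗ[ℂ] Matrix m m ℂ) (hf : ∀ A, A.PosSemidef → (f A).PosSemidef)
    (A : Matrix n n ℂ) : f Aᴴ = (f A)ᴴ :=
  map_star (PositiveLinearMap.mk₀ f fun A hA => (hf A hA.posSemidef).nonneg) A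

end Matrix

section TraceNorm

variable {n : Type*} [Fintype n] [DecidableEq n]

theorem traceNorm_eq_re_trace_cfcAbs (A : Matrix n n ℂ) :
    traceNorm A = (CFC.abs A).trace.re := by
  have hA := posSemidef_conjTranspose_mul_self A
  rw [CFC.abs, CFC.sqrt_eq_cfc, star_eq_conjTranspose, cfc_nnreal_eq_real _ _ hA.nonneg,
    hA.1.cfc_eq]
  simp only [IsHermitian.cfc, Unitary.conjStarAlgAut_apply, traceNorm]
  congr 5
  ext i
  simp [Real.coe_sqrt, Real.coe_toNNReal', max_eq_left (hA.eigenvalues_nonneg i)]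

theorem traceNorm_smul (c : ℂ) (A : Matrix n n ℂ) : traceNorm (c • A) = ‖c‖ * traceNorm A := by
  simp only [traceNorm_eq_re_trace_cfcAbs, CFC.abs_smul, trace_smul, Complex.real_smul,
    Complex.re_ofReal_mul]

theorem traceNorm_of_posSemidef {A : Matrix n n ℂ} (hA : A.PosSemidef) :
    traceNorm A = A.trace.re := by
  rw [traceNorm_eq_re_trace_cfcAbs, CFC.abs_of_nonneg A hA.nonneg]

theorem traceNorm_sub_of_mul_eq_zero {X Y : Matrix n n ℂ} (hX : X.IsHermitian)
    (hY : Y.IsHermitian) (h : X * Y = 0) : traceNorm (X - Y) = traceNorm X + traceNorm Y := by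
  rw [sub_eq_add_neg, traceNorm_eq_re_trace_cfcAbs,
    hX.cfcAbs_add_of_mul_eq_zero hY.neg (by rw [Matrix.mul_neg, h, neg_zero]), CFC.abs_neg,
    trace_add, Complex.add_re, traceNorm_eq_re_trace_cfcAbs, traceNorm_eq_re_trace_cfcAbs]

theorem traceNorm_sub_re_trace {A : Matrix n n ℂ} (hA : A.IsHermitian) :
    traceNorm A - A.trace.re = 2 * (A⁻).trace.re := by
  rw [traceNorm_eq_re_trace_cfcAbs, ← Complex.sub_re, ← trace_sub, CFC.abs_sub_self A hA,
    trace_smul]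
  simp

theorem re_trace_le_traceNorm {A : Matrix n n ℂ} (hA : A.IsHermitian) :
    A.trace.re ≤ traceNorm A := by
  have h := traceNorm_sub_re_trace hA
  have := (Complex.nonneg_iff.mp (CFC.negPart_nonneg A).posSemidef.trace_nonneg).1
  linarith

theorem re_trace_lt_traceNorm {A : Matrix n n ℂ} (hA : A.IsHermitian) (hA' : ¬ A.PosSemidef) :
    A.trace.re < traceNorm A := by
  have hneg : A⁻ ≠ 0 := fun h0 => hA' <| by
    rw [← CFC.posPart_sub_negPart A hA, h0, sub_zero]
    exact (CFC.posPart_nonneg A).posSemidef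
  have h := traceNorm_sub_re_trace hA
  have := (CFC.negPart_nonneg A).posSemidef.re_trace_pos hneg
  linarith

end TraceNorm

section States

variable {n : Type*} [Fintype n] [DecidableEq n]

theorem IsState.nonempty {ρ : Matrix n n ℂ} (hρ : IsState ρ) : Nonempty n := by
  by_contra h
  have : IsEmpty n := not_nonempty_iff.mp h
  simpa using hρ.2

theorem isState_single (i : n) : IsState (single i i (1 : ℂ)) := by
  refine ⟨?_, trace_single_eq_same i 1⟩
  rw [← diagonal_single]
  refine posSemidef_diagonal_iff.mpr fun j => ?_
  rcases eq_or_ne j i with rfl | h <;> simp [*]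

theorem IsState.kronecker {m : Type*} [Fintype m] [DecidableEq m] {ρ : Matrix m m ℂ}
    {σ : Matrix n n ℂ} (hρ : IsState ρ) (hσ : IsState σ) : IsState (ρ ⊗ₖ σ) :=
  ⟨hρ.1.kronecker hσ.1, by rw [trace_kronecker, hρ.2, hσ.2, one_mul]⟩

theorem Matrix.PosSemidef.isState_inv_trace_smul {A : Matrix n n ℂ} (hA : A.PosSemidef)
    (h : A ≠ 0) : IsState (A.trace⁻¹ • A) :=
  ⟨hA.smul (inv_nonneg_of_nonneg hA.trace_nonneg), by
    rw [trace_smul, smul_eq_mul, inv_mul_cancel₀ (mt hA.trace_eq_zero_iff.mp h)]⟩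

theorem Matrix.IsHermitian.exists_isState_sub {H : Matrix n n ℂ} (hH : H.IsHermitian)
    (htr : H.trace = 0) (h0 : H ≠ 0) :
    ∃ c : ℂ, 0 < c ∧ ∃ ρ₁ ρ₂, IsState ρ₁ ∧ IsState ρ₂ ∧ H = c • (ρ₁ - ρ₂) := by
  have hH' : H⁺ - H⁻ = H := CFC.posPart_sub_negPart H hH
  have hpos := (CFC.posPart_nonneg H).posSemidef
  have hneg := (CFC.negPart_nonneg H).posSemidef
  have htr' : (H⁻).trace = (H⁺).trace := by
    rw [eq_comm, ← sub_eq_zero, ← trace_sub, hH', htr]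
  have hpos0 : H⁺ ≠ 0 := fun h => h0 <| by
    rw [← hH', h, hneg.trace_eq_zero_iff.mp (by rw [htr', h, trace_zero]), sub_zero]
  have hneg0 : H⁻ ≠ 0 := fun h =>
    hpos0 <| hpos.trace_eq_zero_iff.mp (by rw [← htr', h, trace_zero])
  have hc : (H⁺).trace ≠ 0 := mt hpos.trace_eq_zero_iff.mp hpos0
  refine ⟨(H⁺).trace, lt_of_le_of_ne hpos.trace_nonneg hc.symm, _, _,
    hpos.isState_inv_trace_smul hpos0, hneg.isState_inv_trace_smul hneg0, ?_⟩
  rw [htr', smul_sub, smul_smul, smul_smul, mul_inv_cancel₀ hc, one_smul, one_smul, hH']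

theorem exists_isState_map_sub_eq_smul_sub (f : Matrix n n ℂ ≃ₗ[ℂ] Matrix n n ℂ)
    (hf_pos : ∀ A, A.PosSemidef → (f A).PosSemidef) (hf_tr : ∀ A, (f A).trace = A.trace)
    {σ₁ σ₂ : Matrix n n ℂ} (h₁ : IsState σ₁) (h₂ : IsState σ₂) (hne : σ₁ ≠ σ₂) :
    ∃ c : ℂ, 0 < c ∧ ∃ ρ₁ ρ₂, IsState ρ₁ ∧ IsState ρ₂ ∧ f ρ₁ - f ρ₂ = c • (σ₁ - σ₂) := by
  set H := f.symm (σ₁ - σ₂)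
  have hfH : f H = σ₁ - σ₂ := f.apply_symm_apply _
  have hherm : H.IsHermitian := f.injective <| by
    change f.toLinearMap Hᴴ = f H
    rw [map_conjTranspose_of_posSemidef _ hf_pos, LinearEquiv.coe_coe, hfH,
      conjTranspose_sub, h₁.1.1.eq, h₂.1.1.eq]
  have htr : H.trace = 0 := by rw [← hf_tr, hfH, trace_sub, h₁.2, h₂.2, sub_self]
  have h0 : H ≠ 0 := fun h => hne <| sub_eq_zero.mp <| by rw [← hfH, h, map_zero]
  obtain ⟨c, hc, ρ₁, ρ₂, hρ₁, hρ₂, hHρ⟩ := hherm.exists_isState_sub htr h0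
  refine ⟨c⁻¹, Right.inv_pos.mpr hc, ρ₁, ρ₂, hρ₁, hρ₂, ?_⟩
  rw [← map_sub, ← hfH, hHρ, map_smul, smul_smul, inv_mul_cancel₀ hc.ne', one_smul]

end States

section Ampliation

variable {n d : ℕ} (Φ : Matrix (Fin d) (Fin d) ℂ →ₗ[ℂ] Matrix (Fin d) (Fin d) ℂ)

def ampliationLinearMap :
    Matrix (Fin n × Fin d) (Fin n × Fin d) ℂ →ₗ[ℂ] Matrix (Fin n × Fin d) (Fin n × Fin d) ℂ :=
  (compLinearEquiv _ _ _ _ ℂ ℂ).toLinearMap ∘ₗ Φ.mapMatrix ∘ₗ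
    (compLinearEquiv _ _ _ _ ℂ ℂ).symm.toLinearMap

def ampliationLinearEquiv (e : Matrix (Fin d) (Fin d) ℂ ≃ₗ[ℂ] Matrix (Fin d) (Fin d) ℂ) :
    Matrix (Fin n × Fin d) (Fin n × Fin d) ℂ ≃ₗ[ℂ] Matrix (Fin n × Fin d) (Fin n × Fin d) ℂ :=
  (compLinearEquiv _ _ _ _ ℂ ℂ).symm ≪≫ₗ e.mapMatrix ≪≫ₗ compLinearEquiv _ _ _ _ ℂ ℂ

theorem ampliation_sub (A B : Matrix (Fin n × Fin d) (Fin n × Fin d) ℂ) :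
    ampliation Φ (A - B) = ampliation Φ A - ampliation Φ B :=
  map_sub (ampliationLinearMap Φ) A B

theorem ampliation_smul (c : ℂ) (A : Matrix (Fin n × Fin d) (Fin n × Fin d) ℂ) :
    ampliation Φ (c • A) = c • ampliation Φ A :=
  map_smul (ampliationLinearMap Φ) c A

theorem ampliation_zero : ampliation Φ (0 : Matrix (Fin n × Fin d) (Fin n × Fin d) ℂ) = 0 :=
  map_zero (ampliationLinearMap Φ)

theorem ampliation_kronecker (E : Matrix (Fin n) (Fin n) ℂ) (W : Matrix (Fin d) (Fin d) ℂ) :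
    ampliation Φ (E ⊗ₖ W) = E ⊗ₖ Φ W := by
  ext p q
  change Φ (E p.1 q.1 • W) p.2 q.2 = _
  simp

-- The ascriptions on `1` are needed: without them `*` elaborates through `CStarMatrix`.
theorem ampliation_kronecker_one_mul_mul {m : ℕ} (M : Matrix (Fin m) (Fin n) ℂ)
    (A : Matrix (Fin n × Fin d) (Fin n × Fin d) ℂ) (N : Matrix (Fin n) (Fin m) ℂ) :
    ampliation Φ ((M ⊗ₖ (1 : Matrix (Fin d) (Fin d) ℂ)) * A * (N ⊗ₖ (1 : Matrix (Fin d) (Fin d) ℂ)))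
      = (M ⊗ₖ (1 : Matrix (Fin d) (Fin d) ℂ)) * ampliation Φ A *
        (N ⊗ₖ (1 : Matrix (Fin d) (Fin d) ℂ)) := by
  ext p q
  have hblock : (of fun i j => ((M ⊗ₖ (1 : Matrix (Fin d) (Fin d) ℂ)) * A *
      (N ⊗ₖ (1 : Matrix (Fin d) (Fin d) ℂ))) (p.1, i) (q.1, j)) =
      ∑ a, ∑ c, (M p.1 a * N c q.1) • of fun i j => A (a, i) (c, j) := by
    ext i j
    simp only [of_apply, mul_apply, Fintype.sum_prod_type, kroneckerMap_apply, one_apply,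
      Matrix.sum_apply, Matrix.smul_apply, smul_eq_mul, mul_ite, mul_one, mul_zero, ite_mul,
      zero_mul, Finset.sum_ite_eq, Finset.sum_ite_eq', Finset.mem_univ, if_true, Finset.sum_mul]
    rw [Finset.sum_comm]
    exact Finset.sum_congr rfl fun _ _ => Finset.sum_congr rfl fun _ _ => by ring
  simp only [ampliation, of_apply, hblock, map_sum, map_smul]
  simp only [Matrix.sum_apply, Matrix.smul_apply, of_apply, mul_apply, Fintype.sum_prod_type,
    kroneckerMap_apply, one_apply, smul_eq_mul, mul_ite, mul_one, mul_zero, ite_mul, zero_mul,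
    Finset.sum_ite_eq, Finset.sum_ite_eq', Finset.mem_univ, if_true, Finset.sum_mul]
  rw [Finset.sum_comm]
  exact Finset.sum_congr rfl fun _ _ => Finset.sum_congr rfl fun _ _ => by ring

theorem ampliation_mul_kronecker_one (A : Matrix (Fin n × Fin d) (Fin n × Fin d) ℂ)
    (N : Matrix (Fin n) (Fin n) ℂ) :
    ampliation Φ (A * (N ⊗ₖ (1 : Matrix (Fin d) (Fin d) ℂ))) =
      ampliation Φ A * (N ⊗ₖ (1 : Matrix (Fin d) (Fin d) ℂ)) := by
  simpa [one_kronecker_one] using ampliation_kronecker_one_mul_mul Φ 1 A N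

variable {Φ}

theorem ampliation_trace (hΦ : TracePreserving Φ) (A : Matrix (Fin n × Fin d) (Fin n × Fin d) ℂ) :
    (ampliation Φ A).trace = A.trace := by
  simp only [trace, diag, Fintype.sum_prod_type]
  exact Finset.sum_congr rfl fun a _ => hΦ (of fun i j => A (a, i) (a, j))

theorem ampliation_conjTranspose (hΦ : HermPreserving Φ)
    (A : Matrix (Fin n × Fin d) (Fin n × Fin d) ℂ) :
    (ampliation Φ A)ᴴ = ampliation Φ Aᴴ := by
  ext p q
  have hblock : (of fun i j => Aᴴ (p.1, i) (q.1, j) : Matrix (Fin d) (Fin d) ℂ) =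
      (of fun i j => A (q.1, i) (p.1, j))ᴴ := by
    ext i j
    simp
  rw [conjTranspose_apply, ampliation, ampliation, of_apply, of_apply, hblock, hΦ,
    conjTranspose_apply]

theorem CompletelyPositive.posSemidef_ampliation (hΦ : CompletelyPositive Φ)
    {A : Matrix (Fin n × Fin d) (Fin n × Fin d) ℂ} (hA : A.PosSemidef) :
    (ampliation Φ A).PosSemidef := by
  rcases Nat.eq_zero_or_pos n with rfl | hn
  · rw [Subsingleton.elim (ampliation Φ A) 0]
    exact .zero
  · exact hΦ n hn A hA

theorem IsState.ampliation (hΦ : CompletelyPositive Φ) (hΦ' : TracePreserving Φ)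
    {ρ : Matrix (Fin n × Fin d) (Fin n × Fin d) ℂ} (hρ : IsState ρ) :
    IsState (ampliation Φ ρ) :=
  ⟨hΦ.posSemidef_ampliation hρ.1, by rw [ampliation_trace hΦ', hρ.2]⟩

end Ampliation

section NotCompletelyPositive

variable {d : ℕ}

-- `fun p => if p.1 = p.2.castSucc then 1 else 0` is the unnormalised maximally entangled vector.
theorem exists_kronecker_one_mulVec_eq {n : ℕ} (x : Fin n × Fin d → ℂ) :
    ∃ M : Matrix (Fin n) (Fin (d + 1)) ℂ, M * single (Fin.last d) (Fin.last d) (1 : ℂ) = 0 ∧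
      (M ⊗ₖ (1 : Matrix (Fin d) (Fin d) ℂ)) *ᵥ (fun p => if p.1 = p.2.castSucc then 1 else 0) =
        x := by
  refine ⟨of fun a k => Fin.lastCases 0 (fun j => x (a, j)) k, ?_, ?_⟩
  · ext a k
    rcases Fin.eq_castSucc_or_eq_last k with ⟨j, rfl⟩ | rfl
    · simp [mul_single_apply_of_ne (hbj := Fin.castSucc_ne_last j)]
    · simp [mul_single_apply_same]
  · funext p
    simp only [mulVec, dotProduct, Fintype.sum_prod_type, kroneckerMap_apply, one_apply, of_apply]
    rw [Finset.sum_comm]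
    simp [Finset.sum_ite_eq']

theorem exists_isState_ampliation_not_posSemidef
    {V : Matrix (Fin d) (Fin d) ℂ →ₗ[ℂ] Matrix (Fin d) (Fin d) ℂ} (hVH : HermPreserving V)
    (hV : ¬ CompletelyPositive V) :
    ∃ σ : Matrix (Fin (d + 1) × Fin d) (Fin (d + 1) × Fin d) ℂ, IsState σ ∧
      σ * (single (Fin.last d) (Fin.last d) (1 : ℂ) ⊗ₖ (1 : Matrix (Fin d) (Fin d) ℂ)) = 0 ∧
      ¬ (ampliation V σ).PosSemidef := by
  simp only [CompletelyPositive, not_forall] at hV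
  obtain ⟨n, -, A, hA, hVA⟩ := hV
  obtain ⟨x, hx⟩ : ∃ x, ¬ 0 ≤ star x ⬝ᵥ ampliation V A *ᵥ x := by
    by_contra! h
    have hherm : (ampliation V A).IsHermitian := by
      rw [IsHermitian, ampliation_conjTranspose hVH, hA.1.eq]
    exact hVA (.of_dotProduct_mulVec_nonneg hherm h)
  obtain ⟨M, hM, hMv⟩ := exists_kronecker_one_mulVec_eq x
  set K := M ⊗ₖ (1 : Matrix (Fin d) (Fin d) ℂ)
  have hKE : K * (single (Fin.last d) (Fin.last d) (1 : ℂ) ⊗ₖ (1 : Matrix (Fin d) (Fin d) ℂ)) =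
      0 := by
    rw [← mul_kronecker_mul, hM, zero_kronecker]
  have hVσ : ampliation V (Kᴴ * A * K) = Kᴴ * ampliation V A * K := by
    rw [conjTranspose_kronecker, conjTranspose_one]
    exact ampliation_kronecker_one_mul_mul V Mᴴ A M
  have hnot : ¬ (ampliation V (Kᴴ * A * K)).PosSemidef := fun h => hx <| by
    have := h.dotProduct_mulVec_nonneg (fun p => if p.1 = p.2.castSucc then 1 else 0)
    rwa [hVσ, ← mulVec_mulVec, ← mulVec_mulVec, dotProduct_mulVec, ← star_mulVec, hMv] at this
  have hσ0 : Kᴴ * A * K ≠ 0 := fun h => hnot (by rw [h, ampliation_zero]; exact .zero)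
  have hpsd := hA.conjTranspose_mul_mul_same K
  refine ⟨_, hpsd.isState_inv_trace_smul hσ0, ?_, fun h => hnot ?_⟩
  · simp only [smul_mul_assoc, Matrix.mul_assoc, hKE, Matrix.mul_zero, smul_zero]
  · rw [ampliation_smul] at h
    simpa [smul_smul, mul_inv_cancel₀ (mt hpsd.trace_eq_zero_iff.mp hσ0)] using
      h.smul hpsd.trace_nonneg

theorem exists_isState_traceNorm_lt_traceNorm_ampliation
    {V : Matrix (Fin d) (Fin d) ℂ →ₗ[ℂ] Matrix (Fin d) (Fin d) ℂ} (hVTP : TracePreserving V)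
    (hVH : HermPreserving V) (hV : ¬ CompletelyPositive V) :
    ∃ σ σ' : Matrix (Fin (d + 1) × Fin d) (Fin (d + 1) × Fin d) ℂ, IsState σ ∧ IsState σ' ∧
      traceNorm (σ - σ') < traceNorm (ampliation V (σ - σ')) := by
  obtain ⟨σ, hσ, hσE, hVσ⟩ := exists_isState_ampliation_not_posSemidef hVH hV
  obtain ⟨⟨-, i⟩⟩ := hσ.nonempty
  set E := single (Fin.last d) (Fin.last d) (1 : ℂ)
  set τ := single i i (1 : ℂ)
  have hE (W : Matrix (Fin d) (Fin d) ℂ) :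
      E ⊗ₖ W = (E ⊗ₖ (1 : Matrix (Fin d) (Fin d) ℂ)) * (E ⊗ₖ W) := by
    rw [← mul_kronecker_mul, single_mul_single_same, one_mul, Matrix.one_mul]
  have hσ' : IsState (E ⊗ₖ τ) := (isState_single _).kronecker (isState_single i)
  refine ⟨σ, E ⊗ₖ τ, hσ, hσ', ?_⟩
  have hnorm : traceNorm (σ - E ⊗ₖ τ) = 2 := by
    rw [traceNorm_sub_of_mul_eq_zero hσ.1.1 hσ'.1.1
        (by rw [hE, ← Matrix.mul_assoc, hσE, Matrix.zero_mul]),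
      traceNorm_of_posSemidef hσ.1, traceNorm_of_posSemidef hσ'.1, hσ.2, hσ'.2]
    norm_num
  have hX : (ampliation V σ).IsHermitian := by
    rw [IsHermitian, ampliation_conjTranspose hVH, hσ.1.1.eq]
  have hY : (E ⊗ₖ V τ).IsHermitian := by
    rw [IsHermitian, conjTranspose_kronecker, ← hVH, (isState_single _).1.1.eq,
      (isState_single i).1.1.eq]
  have hXY : ampliation V σ * (E ⊗ₖ V τ) = 0 := by
    rw [hE, ← Matrix.mul_assoc, ← ampliation_mul_kronecker_one, hσE, ampliation_zero,
      Matrix.zero_mul]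
  have hXnorm := re_trace_lt_traceNorm hX hVσ
  have hYnorm := re_trace_le_traceNorm hY
  rw [ampliation_trace hVTP, hσ.2, Complex.one_re] at hXnorm
  rw [trace_kronecker, hVTP, (isState_single _).2, (isState_single i).2, one_mul,
    Complex.one_re] at hYnorm
  rw [hnorm, ampliation_sub, ampliation_kronecker, traceNorm_sub_of_mul_eq_zero hX hY hXY]
  linarith

end NotCompletelyPositive

theorem witness_states_in_image_exist_general (d : ℕ)
    (Λ : Matrix (Fin d) (Fin d) ℂ →ₗ[ℂ] Matrix (Fin d) (Fin d) ℂ)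
    (hΛTP : TracePreserving Λ) (hΛCP : CompletelyPositive Λ)
    (hΛbij : Function.Bijective Λ)
    (V : Matrix (Fin d) (Fin d) ℂ →ₗ[ℂ] Matrix (Fin d) (Fin d) ℂ)
    (hVTP : TracePreserving V) (hVH : HermPreserving V)
    (hVnotCP : ¬ CompletelyPositive V) :
    ∃ ρ' ρ'' : Matrix (Fin (d+1) × Fin d) (Fin (d+1) × Fin d) ℂ,
      IsState ρ' ∧ IsState ρ'' ∧
      (∃ ρ, IsState ρ ∧ ampliation Λ ρ = ρ') ∧
      (∃ ρ, IsState ρ ∧ ampliation Λ ρ = ρ'') ∧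
      traceNorm (ampliation V (ρ' - ρ'')) > traceNorm (ρ' - ρ'') := by
  obtain ⟨σ, σ', hσ, hσ', hlt⟩ :=
    exists_isState_traceNorm_lt_traceNorm_ampliation hVTP hVH hVnotCP
  have hne : σ ≠ σ' := by
    rintro rfl
    simp [ampliation_zero] at hlt
  obtain ⟨c, hc, ρ₁, ρ₂, hρ₁, hρ₂, hρ⟩ :=
    exists_isState_map_sub_eq_smul_sub (ampliationLinearEquiv (.ofBijective Λ hΛbij))
      (fun _ => hΛCP.posSemidef_ampliation) (ampliation_trace hΛTP) hσ hσ' hne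
  change ampliation Λ ρ₁ - ampliation Λ ρ₂ = c • (σ - σ') at hρ
  refine ⟨_, _, hρ₁.ampliation hΛCP hΛTP, hρ₂.ampliation hΛCP hΛTP, ⟨ρ₁, hρ₁, rfl⟩,
    ⟨ρ₂, hρ₂, rfl⟩, ?_⟩
  rw [hρ, ampliation_smul, traceNorm_smul, traceNorm_smul]
  exact mul_lt_mul_of_pos_left hlt (norm_pos_iff.mpr hc.ne')

/-- Constructive witness: for a bijective CPTP map `Λ` and a trace-preserving,
Hermiticity-preserving `V` that is not completely positive, there exist two states in the
image of the set of states under `I_{d+1} ⊗ Λ` whose trace-norm distance increases under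
`I_{d+1} ⊗ V`. -/
theorem witness_states_in_image_exist (d : ℕ) (hd : 1 ≤ d)
    (Λ : Matrix (Fin d) (Fin d) ℂ →ₗ[ℂ] Matrix (Fin d) (Fin d) ℂ)
    (hΛTP : TracePreserving Λ) (hΛCP : CompletelyPositive Λ)
    (hΛbij : Function.Bijective Λ)
    (V : Matrix (Fin d) (Fin d) ℂ →ₗ[ℂ] Matrix (Fin d) (Fin d) ℂ)
    (hVTP : TracePreserving V) (hVH : HermPreserving V)
    (hVnotCP : ¬ CompletelyPositive V) :
    ∃ ρ' ρ'' : Matrix (Fin (d+1) × Fin d) (Fin (d+1) × Fin d) ℂ,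
      IsState ρ' ∧ IsState ρ'' ∧
      (∃ ρ, IsState ρ ∧ ampliation Λ ρ = ρ') ∧
      (∃ ρ, IsState ρ ∧ ampliation Λ ρ = ρ'') ∧
      traceNorm (ampliation V (ρ' - ρ'')) > traceNorm (ρ' - ρ'') :=
  witness_states_in_image_exist_general d Λ hΛTP hΛCP hΛbij V hVTP hVH hVnotCP
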